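/- The equal-share cost sharing scheme is not cross-monotone for the minimum-power broadcast problem: there exist a parent node j with circuitry power p^c_j ≥ 0, unicast powers p_{h,j} ≥ 0, a finite set of children M with i ∈ M, and a node k ∉ M, such that C_i^ES(j, M ∪ {k}) > C_i^ES(j, M). -/
import Mathlib


open Finset

/-- Total power required at a parent node with circuitry power `pcj` and
unicast powers `pj` to serve the set `M` of children. -/
noncomputable def parentPower {W : Type*} (pcj : ℝ) (pj : W → ℝ) (M : Finset W) : ℝ :=
  if h : M.Nonempty then pcj + M.sup' h pj else 0

/-- Equal-share (ES) cost of a child in the group `M`: the parent power divided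
by the number of children. -/
noncomputable def esCost {W : Type*} (pcj : ℝ) (pj : W → ℝ) (M : Finset W) : ℝ :=
  parentPower pcj pj M / (M.card : ℝ)

/-- The equal-share cost sharing scheme is not cross-monotone for the
minimum-power broadcast problem: the ES cost of an existing child can strictly
increase when a new child joins the same parent. -/
theorem es_not_cross_monotone :
    ∃ (n : ℕ) (pcj : ℝ) (pj : Fin n → ℝ) (M : Finset (Fin n)) (i k : Fin n),
      0 ≤ pcj ∧ (∀ h, 0 ≤ pj h) ∧ i ∈ M ∧ k ∉ M ∧
      esCost pcj pj (insert k M) > esCost pcj pj M := by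
  refine ⟨2, 0, fun h => if h = 0 then 0 else 4, {0}, 0, 1, le_refl _, ?_, by decide, by decide, ?_⟩
  · intro h; dsimp only; split <;> norm_num
  · have h1 : (insert (1 : Fin 2) {0} : Finset (Fin 2)) = {1, 0} := rfl
    rw [h1]
    simp only [esCost, parentPower]
    rw [dif_pos ⟨1, by decide⟩, dif_pos ⟨0, by decide⟩]
    norm_num
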